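/- arXiv:2508.04704 — 4 statements merged into one kernel-verified Lean document; each statement's English description precedes it below -/
import Mathlib

section
/- Let A, B, C be real numbers and B(+1), B(−1) > 0 with A ≥ C². The 2×2 real symmetric matrix M with diagonal entries M_{++} = −(1/√3)·C/√(B(+1)), M_{−−} = +(1/√3)·C/√(B(−1)), and off-diagonal entries M_{+−} = M_{−+} = −(1/√3)·√(A−C²)·(1/2)(1/√(B(+1)) + 1/√(B(−1))) has eigenvalues λ_± = ±(1/√3)·[ (√A ∓ C)/(2√(B(+1))) + (√A ± C)/(2√(B(−1))) ]. -/
/-! A 2×2 matrix over a domain has as eigenvalues any two numbers whose sum is its trace and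
whose product is its determinant, since they are then the roots of its characteristic polynomial
`X² - tr M · X + det M`. For the matrix at hand, with `x = 1/√B(+1)`, `y = 1/√B(-1)`, the trace is
`C (y - x)/√3` and the determinant is `-(C² x y + (A - C²)(x + y)²/4)/3`; both identities for the
claimed eigenvalues reduce, after `√A² = A` and `√(A - C²)² = A - C²`, to polynomial identities. -/

open Polynomial in
theorem Matrix.hasEigenvalue_toLin'_of_trace_of_det {R n : Type*} [CommRing R] [IsDomain R]
    [Fintype n] [DecidableEq n] (hn : Fintype.card n = 2) {M : Matrix n n R} {μ ν : R}
    (htrace : M.trace = μ + ν) (hdet : M.det = μ * ν) :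
    Module.End.HasEigenvalue M.toLin' μ ∧ Module.End.HasEigenvalue M.toLin' ν := by
  have hcharpoly : M.charpoly = (X - C μ) * (X - C ν) := by
    rw [M.charpoly_of_card_eq_two hn, htrace, hdet, C_add, C_mul]
    ring
  simp [Module.End.hasEigenvalue_iff_isRoot_charpoly, hcharpoly]

/-- Eigenvalues of the 2×2 symmetric matrix of the cosine operator on the
two-dimensional intertwiner space. -/
theorem stmt_4 (A C Bp Bm : ℝ) (hAC : C ^ 2 ≤ A) (hBp : 0 < Bp) (hBm : 0 < Bm)
    (M : Matrix (Fin 2) (Fin 2) ℝ)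
    (hM : M = !![-(1 / Real.sqrt 3) * C / Real.sqrt Bp,
        -(1 / Real.sqrt 3) * Real.sqrt (A - C ^ 2) *
          ((1 / 2) * (1 / Real.sqrt Bp) + (1 / 2) * (1 / Real.sqrt Bm));
        -(1 / Real.sqrt 3) * Real.sqrt (A - C ^ 2) *
          ((1 / 2) * (1 / Real.sqrt Bp) + (1 / 2) * (1 / Real.sqrt Bm)),
        (1 / Real.sqrt 3) * C / Real.sqrt Bm]) :
    Module.End.HasEigenvalue (Matrix.toLin' M)
      ((1 / Real.sqrt 3) *
        ((Real.sqrt A - C) / (2 * Real.sqrt Bp) + (Real.sqrt A + C) / (2 * Real.sqrt Bm))) ∧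
    Module.End.HasEigenvalue (Matrix.toLin' M)
      (-(1 / Real.sqrt 3) *
        ((Real.sqrt A + C) / (2 * Real.sqrt Bp) + (Real.sqrt A - C) / (2 * Real.sqrt Bm))) := by
  have hsqrtA : Real.sqrt A ^ 2 = A := Real.sq_sqrt ((sq_nonneg C).trans hAC)
  have hsqrtAC : Real.sqrt (A - C ^ 2) ^ 2 = A - C ^ 2 := Real.sq_sqrt (sub_nonneg.mpr hAC)
  have hp : Real.sqrt Bp ≠ 0 := (Real.sqrt_pos.mpr hBp).ne'
  have hm : Real.sqrt Bm ≠ 0 := (Real.sqrt_pos.mpr hBm).ne'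
  subst hM
  apply Matrix.hasEigenvalue_toLin'_of_trace_of_det (Fintype.card_fin 2)
  · rw [Matrix.trace_fin_two_of]
    field_simp
    ring
  · rw [Matrix.det_fin_two_of]
    field_simp
    linear_combination (Real.sqrt Bp + Real.sqrt Bm) ^ 2 * (hsqrtA - hsqrtAC)
end

section
/- Both eigenvalues λ_± of the cosine operator vanish if and only if A = 0 and C = 0 (given A ≥ C², B(±1) > 0); moreover |λ_±| ≤ 1/√3 whenever A ≤ B(+1) ≤ B(−1). -/
/-- Kernel of the cosine operator and the quantum-mechanical bound `1/√3`. -/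
theorem stmt_6 (A C Bp Bm : ℝ) (hAC : C ^ 2 ≤ A)
    (hBp : 0 < Bp) (hBm : 0 < Bm)
    (lamp lamm : ℝ)
    (hlp : lamp = (1 / Real.sqrt 3) *
      ((Real.sqrt A - C) / (2 * Real.sqrt Bp) + (Real.sqrt A + C) / (2 * Real.sqrt Bm)))
    (hlm : lamm = -(1 / Real.sqrt 3) *
      ((Real.sqrt A + C) / (2 * Real.sqrt Bp) + (Real.sqrt A - C) / (2 * Real.sqrt Bm))) :
    ((lamp = 0 ∧ lamm = 0) ↔ (A = 0 ∧ C = 0)) ∧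
    (A ≤ Bp → Bp ≤ Bm → |lamp| ≤ 1 / Real.sqrt 3 ∧ |lamm| ≤ 1 / Real.sqrt 3) := by
  have hA0 : (0:ℝ) ≤ A := le_trans (sq_nonneg C) hAC
  have hC : |C| ≤ Real.sqrt A := by
    rw [← Real.sqrt_sq_eq_abs]; exact Real.sqrt_le_sqrt hAC
  obtain ⟨hC1, hC2⟩ := abs_le.mp hC
  have h1 : 0 ≤ Real.sqrt A - C := by linarith
  have h2 : 0 ≤ Real.sqrt A + C := by linarith
  have hsBp : 0 < Real.sqrt Bp := Real.sqrt_pos.mpr hBp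
  have hsBm : 0 < Real.sqrt Bm := Real.sqrt_pos.mpr hBm
  have hs3 : 0 < Real.sqrt 3 := Real.sqrt_pos.mpr (by norm_num)
  have ht1 : 0 ≤ (Real.sqrt A - C) / (2 * Real.sqrt Bp) := by positivity
  have ht2 : 0 ≤ (Real.sqrt A + C) / (2 * Real.sqrt Bm) := by positivity
  have ht3 : 0 ≤ (Real.sqrt A + C) / (2 * Real.sqrt Bp) := by positivity
  have ht4 : 0 ≤ (Real.sqrt A - C) / (2 * Real.sqrt Bm) := by positivity
  constructor
  · constructor
    · rintro ⟨hp, _⟩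
      rw [hlp] at hp
      have h3 : (0:ℝ) < 1 / Real.sqrt 3 := by positivity
      have hsum : (Real.sqrt A - C) / (2 * Real.sqrt Bp)
          + (Real.sqrt A + C) / (2 * Real.sqrt Bm) = 0 := by
        rcases mul_eq_zero.mp hp with h | h
        · exact absurd h (ne_of_gt h3)
        · exact h
      have he1 : (Real.sqrt A - C) / (2 * Real.sqrt Bp) = 0 := by linarith
      have he2 : (Real.sqrt A + C) / (2 * Real.sqrt Bm) = 0 := by linarith
      have hn1 : Real.sqrt A - C = 0 := by
        have := (div_eq_zero_iff.mp he1)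
        rcases this with h | h
        · exact h
        · exact absurd h (by positivity)
      have hn2 : Real.sqrt A + C = 0 := by
        have := (div_eq_zero_iff.mp he2)
        rcases this with h | h
        · exact h
        · exact absurd h (by positivity)
      have hsA : Real.sqrt A = 0 := by linarith
      have hA : A = 0 := le_antisymm (Real.sqrt_eq_zero'.mp hsA) hA0
      exact ⟨hA, by linarith⟩
    · rintro ⟨hA, hC0⟩
      subst hA; subst hC0
      simp [hlp, hlm]
  · intro hABp hBpm
    rcases eq_or_lt_of_le hA0 with hA | hA
    · have hC0 : C = 0 := by nlinarith
      have hsA : Real.sqrt A = 0 := by rw [← hA]; simp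
      constructor
      · rw [hlp, hsA, hC0]; simp
      · rw [hlm, hsA, hC0]; simp
    · have hsA : 0 < Real.sqrt A := Real.sqrt_pos.mpr hA
      have hsApBp : Real.sqrt A ≤ Real.sqrt Bp := Real.sqrt_le_sqrt hABp
      have hsBpBm : Real.sqrt Bp ≤ Real.sqrt Bm := Real.sqrt_le_sqrt hBpm
      have hsApBm : Real.sqrt A ≤ Real.sqrt Bm := le_trans hsApBp hsBpBm
      have key : ∀ x y : ℝ, 0 ≤ Real.sqrt A - x → 0 ≤ Real.sqrt A + y →
          (Real.sqrt A - x) / (2 * Real.sqrt Bp) + (Real.sqrt A + y) / (2 * Real.sqrt Bm)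
            ≤ (Real.sqrt A - x) / (2 * Real.sqrt A) + (Real.sqrt A + y) / (2 * Real.sqrt A) := by
        intro x y hx hy
        gcongr
      have hone : (Real.sqrt A - C) / (2 * Real.sqrt A) + (Real.sqrt A + C) / (2 * Real.sqrt A) = 1 := by
        field_simp; ring
      have hone' : (Real.sqrt A + C) / (2 * Real.sqrt A) + (Real.sqrt A - C) / (2 * Real.sqrt A) = 1 := by
        field_simp; ring
      have hSp : (Real.sqrt A - C) / (2 * Real.sqrt Bp) + (Real.sqrt A + C) / (2 * Real.sqrt Bm) ≤ 1 := by
        calc _ ≤ _ := key C C h1 h2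
          _ = 1 := hone
      have hSm : (Real.sqrt A + C) / (2 * Real.sqrt Bp) + (Real.sqrt A - C) / (2 * Real.sqrt Bm) ≤ 1 := by
        have h := key (-C) (-C) (by linarith) (by linarith)
        simp only [sub_neg_eq_add, ← sub_eq_add_neg] at h
        linarith [hone']
      constructor
      · rw [hlp, abs_of_nonneg (by positivity)]
        calc (1 / Real.sqrt 3) * ((Real.sqrt A - C) / (2 * Real.sqrt Bp) + (Real.sqrt A + C) / (2 * Real.sqrt Bm))
            ≤ (1 / Real.sqrt 3) * 1 := by
              apply mul_le_mul_of_nonneg_left hSp (by positivity)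
          _ = 1 / Real.sqrt 3 := mul_one _
      · rw [hlm]
        rw [neg_mul, abs_neg, abs_of_nonneg (by positivity)]
        calc (1 / Real.sqrt 3) * ((Real.sqrt A + C) / (2 * Real.sqrt Bp) + (Real.sqrt A - C) / (2 * Real.sqrt Bm))
            ≤ (1 / Real.sqrt 3) * 1 := by
              apply mul_le_mul_of_nonneg_left hSm (by positivity)
          _ = 1 / Real.sqrt 3 := mul_one _
end

section
/- Let A₀ = B₀ = −σ_z, A₁ = A^z σ_z + A^x σ_x, B₁ = B^z σ_z + B^x σ_x with (A^z)² + (A^x)² = 1 and (B^z)² + (B^x)² = 1. Then the CHSH operator B = A₀⊗B₀ + A₀⊗B₁ + A₁⊗B₀ − A₁⊗B₁ on ℂ²⊗ℂ² has an eigenvalue of modulus 2√(1 + |A^x||B^x|). -/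
/-!
Landau's identity: if `A₀, A₁, B₀, B₁` are involutions and each `Aᵢ` commutes with each `Bⱼ`,
the CHSH operator `C` satisfies `C² = 4 - ⁅A₀, A₁⁆ ⁅B₀, B₁⁆`. Here `⁅A₀, A₁⁆ = -2 Aˣ σ_z σ_x` and
`⁅B₀, B₁⁆ = -2 Bˣ σ_z σ_x`, and `σ_z σ_x ⊗ σ_z σ_x` sends `e₀₁ + s e₁₀` to `-s (e₀₁ + s e₁₀)` for
`s = ±1`. Taking `s` to be the sign of `Aˣ Bˣ` makes `4 (1 + |Aˣ| |Bˣ|)` an eigenvalue of `C²`, and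
whenever `μ²` is an eigenvalue of `C²`, one of `μ`, `-μ` is an eigenvalue of `C`.
-/

open Matrix Kronecker

noncomputable def sigmaX : Matrix (Fin 2) (Fin 2) ℂ := !![0, 1; 1, 0]
noncomputable def sigmaZ : Matrix (Fin 2) (Fin 2) ℂ := !![1, 0; 0, -1]

theorem Module.End.HasEigenvalue.of_sq {R M : Type*} [CommRing R] [AddCommGroup M] [Module R M]
    {f : Module.End R M} {μ : R} (h : (f ^ 2).HasEigenvalue (μ ^ 2)) :
    f.HasEigenvalue μ ∨ f.HasEigenvalue (-μ) := by
  obtain ⟨v, hv⟩ := h.exists_hasEigenvector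
  have hffv : f (f v) = μ ^ 2 • v := by
    rw [← Module.End.mul_apply, ← pow_two]
    exact mem_eigenspace_iff.mp hv.1
  by_cases hw : f v + μ • v = 0
  · refine .inr (hasEigenvalue_of_hasEigenvector ⟨mem_eigenspace_iff.mpr ?_, hv.2⟩)
    rw [neg_smul]
    exact eq_neg_of_add_eq_zero_left hw
  · -- `f v + μ v` is an eigenvector for `μ` because `(f - μ)(f + μ) = f² - μ²` kills `v`
    refine .inl (hasEigenvalue_of_hasEigenvector ⟨mem_eigenspace_iff.mpr ?_, hw⟩)
    rw [map_add, map_smul, hffv, smul_add, pow_two, mul_smul, add_comm]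

theorem sq_chsh_eq_four_sub_lie_mul_lie {R : Type*} [Ring R] {a₀ a₁ b₀ b₁ : R}
    (ha₀ : a₀ * a₀ = 1) (ha₁ : a₁ * a₁ = 1) (hb₀ : b₀ * b₀ = 1) (hb₁ : b₁ * b₁ = 1)
    (h₀₀ : Commute a₀ b₀) (h₀₁ : Commute a₀ b₁) (h₁₀ : Commute a₁ b₀) (h₁₁ : Commute a₁ b₁) :
    (a₀ * b₀ + a₀ * b₁ + a₁ * b₀ - a₁ * b₁) ^ 2 = 4 - ⁅a₀, a₁⁆ * ⁅b₀, b₁⁆ := by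
  have cancel : ∀ {a : R}, a * a = 1 → ∀ c, a * (a * c) = c := fun h c => by
    rw [← mul_assoc, h, one_mul]
  simp only [Ring.lie_def, pow_two, add_mul, mul_add, sub_mul, mul_sub, mul_assoc,
    h₀₀.symm.left_comm, h₀₁.symm.left_comm, h₁₀.symm.left_comm, h₁₁.symm.left_comm,
    cancel ha₀, cancel ha₁, hb₀, hb₁]
  rw [show (4 : R) = 4 • 1 by norm_num]
  abel

namespace Matrix

theorem sub_kronecker {R l m n p : Type*} [NonUnitalNonAssocRing R] (A₁ A₂ : Matrix l m R)
    (B : Matrix n p R) : (A₁ - A₂) ⊗ₖ B = A₁ ⊗ₖ B - A₂ ⊗ₖ B := by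
  ext; simp [sub_mul]

theorem kronecker_sub {R l m n p : Type*} [NonUnitalNonAssocRing R] (A : Matrix l m R)
    (B₁ B₂ : Matrix n p R) : A ⊗ₖ (B₁ - B₂) = A ⊗ₖ B₁ - A ⊗ₖ B₂ := by
  ext; simp [mul_sub]

variable {R m n : Type*} [CommRing R] [Fintype m] [DecidableEq m] [Fintype n] [DecidableEq n]

theorem kronecker_one_mul_one_kronecker (A : Matrix m m R) (B : Matrix n n R) :
    A ⊗ₖ (1 : Matrix n n R) * (1 : Matrix m m R) ⊗ₖ B = A ⊗ₖ B := by
  rw [← mul_kronecker_mul, mul_one, one_mul]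

theorem commute_kronecker_one_one_kronecker (A : Matrix m m R) (B : Matrix n n R) :
    Commute (A ⊗ₖ (1 : Matrix n n R)) ((1 : Matrix m m R) ⊗ₖ B) := by
  rw [Commute, SemiconjBy, kronecker_one_mul_one_kronecker, ← mul_kronecker_mul, mul_one,
    one_mul]

theorem sq_chsh_kronecker_eq_four_sub_lie_kronecker_lie {A₀ A₁ : Matrix m m R}
    {B₀ B₁ : Matrix n n R} (hA₀ : A₀ * A₀ = 1) (hA₁ : A₁ * A₁ = 1) (hB₀ : B₀ * B₀ = 1)
    (hB₁ : B₁ * B₁ = 1) :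
    (A₀ ⊗ₖ B₀ + A₀ ⊗ₖ B₁ + A₁ ⊗ₖ B₀ - A₁ ⊗ₖ B₁) ^ 2 = 4 - ⁅A₀, A₁⁆ ⊗ₖ ⁅B₀, B₁⁆ := by
  have left_sq : ∀ {A : Matrix m m R}, A * A = 1 → A ⊗ₖ (1 : Matrix n n R) * A ⊗ₖ 1 = 1 := by
    intro A hA
    rw [← mul_kronecker_mul, hA, mul_one, one_kronecker_one]
  have right_sq : ∀ {B : Matrix n n R}, B * B = 1 → (1 : Matrix m m R) ⊗ₖ B * 1 ⊗ₖ B = 1 := by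
    intro B hB
    rw [← mul_kronecker_mul, hB, mul_one, one_kronecker_one]
  rw [← kronecker_one_mul_one_kronecker A₀ B₀, ← kronecker_one_mul_one_kronecker A₀ B₁,
    ← kronecker_one_mul_one_kronecker A₁ B₀, ← kronecker_one_mul_one_kronecker A₁ B₁,
    sq_chsh_eq_four_sub_lie_mul_lie (left_sq hA₀) (left_sq hA₁) (right_sq hB₀) (right_sq hB₁)
      (commute_kronecker_one_one_kronecker _ _) (commute_kronecker_one_one_kronecker _ _)
      (commute_kronecker_one_one_kronecker _ _) (commute_kronecker_one_one_kronecker _ _)]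
  simp only [Ring.lie_def, ← mul_kronecker_mul, mul_one, one_mul, ← sub_kronecker,
    ← kronecker_sub]

end Matrix

theorem neg_sigmaZ_mul_self : -sigmaZ * -sigmaZ = 1 := by
  ext i j; fin_cases i <;> fin_cases j <;> simp [sigmaZ]

theorem smul_sigmaZ_add_smul_sigmaX_mul_self {z x : ℂ} (h : z ^ 2 + x ^ 2 = 1) :
    (z • sigmaZ + x • sigmaX) * (z • sigmaZ + x • sigmaX) = 1 := by
  ext i j; fin_cases i <;> fin_cases j <;> simp [sigmaZ, sigmaX] <;> grind

theorem lie_neg_sigmaZ_smul_sigmaZ_add_smul_sigmaX (z x : ℂ) :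
    ⁅-sigmaZ, z • sigmaZ + x • sigmaX⁆ = (-2 * x) • (sigmaZ * sigmaX) := by
  ext i j; fin_cases i <;> fin_cases j <;> simp [Ring.lie_def, sigmaZ, sigmaX] <;> ring

theorem sigmaZ_mul_sigmaX_kronecker_mulVec {s : ℂ} (hs : s * s = 1) :
    (sigmaZ * sigmaX) ⊗ₖ (sigmaZ * sigmaX) *ᵥ (Pi.single (0, 1) 1 + Pi.single (1, 0) s) =
      -s • (Pi.single (0, 1) 1 + Pi.single (1, 0) s : Fin 2 × Fin 2 → ℂ) := by
  ext ⟨i, j⟩; fin_cases i <;> fin_cases j <;> simp [sigmaZ, sigmaX, mulVec_add, hs]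

theorem exists_mul_self_eq_one_mul_eq_abs_mul_abs (a b : ℝ) :
    ∃ s : ℝ, s * s = 1 ∧ s * (a * b) = |a| * |b| := by
  rcases le_total 0 (a * b) with hab | hab
  · exact ⟨1, one_mul 1, by rw [one_mul, ← abs_mul, abs_of_nonneg hab]⟩
  · exact ⟨-1, by norm_num, by rw [neg_one_mul, ← abs_mul, abs_of_nonpos hab]⟩

theorem exists_hasEigenvalue_norm_eq_of_sq_eq
    {M : Matrix (Fin 2 × Fin 2) (Fin 2 × Fin 2) ℂ} {a b : ℝ}
    (hM : M ^ 2 = 4 - (4 * a * b : ℂ) • (sigmaZ * sigmaX) ⊗ₖ (sigmaZ * sigmaX)) :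
    ∃ lam : ℂ, Module.End.HasEigenvalue (toLin' M) lam ∧ ‖lam‖ = 2 * √(1 + |a| * |b|) := by
  obtain ⟨s, hs, hsab⟩ := exists_mul_self_eq_one_mul_eq_abs_mul_abs a b
  set r := 2 * √(1 + |a| * |b|) with hr
  have hr_sq : (r : ℂ) ^ 2 = 4 * (1 + s * (a * b)) := by
    have : r ^ 2 = 4 * (1 + s * (a * b)) := by
      rw [hsab, hr, mul_pow, Real.sq_sqrt (by positivity)]
      norm_num
    exact_mod_cast this
  set v : Fin 2 × Fin 2 → ℂ := Pi.single (0, 1) 1 + Pi.single (1, 0) (s : ℂ) with hv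
  have hv_ne : v ≠ 0 := fun h => by simpa [hv] using congrFun h (0, 1)
  have hM_sq : Module.End.HasEigenvalue (toLin' M ^ 2) ((r : ℂ) ^ 2) := by
    rw [← toLin'_pow, hM]
    refine Module.End.hasEigenvalue_of_hasEigenvector
      ⟨Module.End.mem_eigenspace_iff.mpr ?_, hv_ne⟩
    rw [toLin'_apply, sub_mulVec, smul_mulVec,
      sigmaZ_mul_sigmaX_kronecker_mulVec (by exact_mod_cast hs), ← hv, ofNat_mulVec, smul_smul,
      ← sub_smul]
    congr 1
    linear_combination -hr_sq
  rcases hM_sq.of_sq with h | h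
  · exact ⟨r, h, by simp [hr]⟩
  · exact ⟨-r, h, by simp [hr]⟩

/-- The CHSH operator with settings `A₀ = B₀ = -σz`, `A₁ = Az σz + Ax σx`,
`B₁ = Bz σz + Bx σx` has an eigenvalue of modulus `2√(1+|Ax||Bx|)`. -/
theorem stmt_9 (Az Ax Bz Bx : ℝ) (hA : Az ^ 2 + Ax ^ 2 = 1) (hB : Bz ^ 2 + Bx ^ 2 = 1)
    (A₀ A₁ B₀ B₁ : Matrix (Fin 2) (Fin 2) ℂ)
    (hA₀ : A₀ = -sigmaZ) (hB₀ : B₀ = -sigmaZ)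
    (hA₁ : A₁ = (Az : ℂ) • sigmaZ + (Ax : ℂ) • sigmaX)
    (hB₁ : B₁ = (Bz : ℂ) • sigmaZ + (Bx : ℂ) • sigmaX) :
    ∃ lam : ℂ,
      Module.End.HasEigenvalue
        (Matrix.toLin' (A₀ ⊗ₖ B₀ + A₀ ⊗ₖ B₁ + A₁ ⊗ₖ B₀ - A₁ ⊗ₖ B₁)) lam ∧
      ‖lam‖ = 2 * Real.sqrt (1 + |Ax| * |Bx|) := by
  subst hA₀ hB₀ hA₁ hB₁
  apply exists_hasEigenvalue_norm_eq_of_sq_eq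
  rw [sq_chsh_kronecker_eq_four_sub_lie_kronecker_lie neg_sigmaZ_mul_self
    (smul_sigmaZ_add_smul_sigmaX_mul_self (by exact_mod_cast hA)) neg_sigmaZ_mul_self
    (smul_sigmaZ_add_smul_sigmaX_mul_self (by exact_mod_cast hB)),
    lie_neg_sigmaZ_smul_sigmaZ_add_smul_sigmaX, lie_neg_sigmaZ_smul_sigmaZ_add_smul_sigmaX,
    smul_kronecker, kronecker_smul, smul_smul]
  congr 2
  ring
end

section
/- For angles α_A, α_B ∈ ℝ, the maximal eigenvalue modulus of the CHSH operator with settings A₀ = B₀ = −σ_z, A₁ = cos(α_A)σ_z + sin(α_A)σ_x, B₁ = cos(α_B)σ_z + sin(α_B)σ_x equals 2√(1 + |sin(α_A)||sin(α_B)|), which is ≥ 2, with equality iff sin(α_A)sin(α_B) = 0. -/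
open Matrix Kronecker

/-!
For observables squaring to one, with Alice's commuting with Bob's, the CHSH operator satisfies
`B² = 4 - [A₀, A₁] ⊗ [B₀, B₁]`. Here `A₀ = B₀` is the spin observable at angle `π`, and the
commutator of the spin observables at angles `θ, φ` is `2 sin (φ - θ) σ_z σ_x`, so
`B² = 4 - 4 s J` with `s = sin α_A sin α_B` and `J = σ_z σ_x ⊗ σ_z σ_x` an involution. Hence every
eigenvalue `μ` of `B` has `μ² = 4 ± 4 s`, so `|μ| ≤ 2 √(1 + |s|)`. Conversely `J` has both
eigenvalues `±1`; on an eigenvector of `J` with the right sign, `B² = 4 + 4 |s|`, and then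
`B` or `-B` has the eigenvalue `2 √(1 + |s|)`.
-/

theorem chsh_mul_self {R : Type*} [Ring R] {a₀ a₁ b₀ b₁ : R}
    (ha₀ : a₀ * a₀ = 1) (ha₁ : a₁ * a₁ = 1) (hb₀ : b₀ * b₀ = 1) (hb₁ : b₁ * b₁ = 1)
    (h₀₀ : Commute a₀ b₀) (h₀₁ : Commute a₀ b₁) (h₁₀ : Commute a₁ b₀) (h₁₁ : Commute a₁ b₁) :
    (a₀ * b₀ + a₀ * b₁ + a₁ * b₀ - a₁ * b₁) * (a₀ * b₀ + a₀ * b₁ + a₁ * b₀ - a₁ * b₁) =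
      4 - (a₀ * a₁ - a₁ * a₀) * (b₀ * b₁ - b₁ * b₀) := by
  have hsum : (b₀ + b₁) * (b₀ + b₁) + (b₀ - b₁) * (b₀ - b₁) = 4 := by
    calc _ = 2 * (b₀ * b₀) + 2 * (b₁ * b₁) := by noncomm_ring
      _ = 4 := by rw [hb₀, hb₁]; norm_num
  have hprod : (b₀ + b₁) * (b₀ - b₁) = -(b₀ * b₁ - b₁ * b₀) := by
    calc _ = b₀ * b₀ - b₁ * b₁ - (b₀ * b₁ - b₁ * b₀) := by noncomm_ring
      _ = _ := by rw [hb₀, hb₁, sub_self, zero_sub]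
  have hprod' : (b₀ - b₁) * (b₀ + b₁) = b₀ * b₁ - b₁ * b₀ := by
    calc _ = b₀ * b₀ - b₁ * b₁ + (b₀ * b₁ - b₁ * b₀) := by noncomm_ring
      _ = _ := by rw [hb₀, hb₁, sub_self, zero_add]
  calc (a₀ * b₀ + a₀ * b₁ + a₁ * b₀ - a₁ * b₁) * (a₀ * b₀ + a₀ * b₁ + a₁ * b₀ - a₁ * b₁)
      = (a₀ * (b₀ + b₁) + a₁ * (b₀ - b₁)) * (a₀ * (b₀ + b₁) + a₁ * (b₀ - b₁)) := by
        noncomm_ring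
    _ = a₀ * a₀ * ((b₀ + b₁) * (b₀ + b₁)) + a₀ * a₁ * ((b₀ + b₁) * (b₀ - b₁)) +
          (a₁ * a₀ * ((b₀ - b₁) * (b₀ + b₁)) + a₁ * a₁ * ((b₀ - b₁) * (b₀ - b₁))) := by
      rw [add_mul (a₀ * (b₀ + b₁)), mul_add (a₀ * (b₀ + b₁)), mul_add (a₁ * (b₀ - b₁)),
        (h₀₀.add_right h₀₁).symm.mul_mul_mul_comm, (h₁₀.add_right h₁₁).symm.mul_mul_mul_comm,
        (h₀₀.sub_right h₀₁).symm.mul_mul_mul_comm, (h₁₀.sub_right h₁₁).symm.mul_mul_mul_comm]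
    _ = ((b₀ + b₁) * (b₀ + b₁) + (b₀ - b₁) * (b₀ - b₁)) -
          (a₀ * a₁ - a₁ * a₀) * (b₀ * b₁ - b₁ * b₀) := by
      rw [ha₀, ha₁, hprod, hprod']; noncomm_ring
    _ = _ := by rw [hsum]

theorem Matrix.sub_kronecker_s14 {l m n p R : Type*} [Ring R] (A₁ A₂ : Matrix l m R)
    (B : Matrix n p R) : (A₁ - A₂) ⊗ₖ B = A₁ ⊗ₖ B - A₂ ⊗ₖ B := by
  ext; simp [sub_mul]

theorem Matrix.kronecker_sub_s14 {l m n p R : Type*} [Ring R] (A : Matrix l m R)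
    (B₁ B₂ : Matrix n p R) : A ⊗ₖ (B₁ - B₂) = A ⊗ₖ B₁ - A ⊗ₖ B₂ := by
  ext; simp [mul_sub]

section Kronecker

variable {m n R : Type*} [Fintype m] [Fintype n] [DecidableEq m] [DecidableEq n] [CommRing R]

theorem Matrix.kronecker_one_mul_one_kronecker_s14 (A : Matrix m m R) (B : Matrix n n R) :
    (A ⊗ₖ 1) * (1 ⊗ₖ B) = A ⊗ₖ B := by
  rw [← mul_kronecker_mul, mul_one, one_mul]

theorem Matrix.commute_kronecker_one_one_kronecker_s14 (A : Matrix m m R) (B : Matrix n n R) :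
    Commute (A ⊗ₖ (1 : Matrix n n R)) ((1 : Matrix m m R) ⊗ₖ B) := by
  rw [Commute, SemiconjBy, kronecker_one_mul_one_kronecker_s14, ← mul_kronecker_mul, mul_one, one_mul]

def chshOperator (A₀ A₁ : Matrix m m R) (B₀ B₁ : Matrix n n R) : Matrix (m × n) (m × n) R :=
  A₀ ⊗ₖ B₀ + A₀ ⊗ₖ B₁ + A₁ ⊗ₖ B₀ - A₁ ⊗ₖ B₁

theorem chshOperator_mul_self {A₀ A₁ : Matrix m m R} {B₀ B₁ : Matrix n n R}
    (hA₀ : A₀ * A₀ = 1) (hA₁ : A₁ * A₁ = 1) (hB₀ : B₀ * B₀ = 1) (hB₁ : B₁ * B₁ = 1) :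
    chshOperator A₀ A₁ B₀ B₁ * chshOperator A₀ A₁ B₀ B₁ =
      4 - (A₀ * A₁ - A₁ * A₀) ⊗ₖ (B₀ * B₁ - B₁ * B₀) := by
  have left {A : Matrix m m R} (hA : A * A = 1) : (A ⊗ₖ (1 : Matrix n n R)) * (A ⊗ₖ 1) = 1 := by
    rw [← mul_kronecker_mul, hA, mul_one, one_kronecker_one]
  have right {B : Matrix n n R} (hB : B * B = 1) : ((1 : Matrix m m R) ⊗ₖ B) * (1 ⊗ₖ B) = 1 := by
    rw [← mul_kronecker_mul, hB, mul_one, one_kronecker_one]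
  have hcomm := chsh_mul_self (left hA₀) (left hA₁) (right hB₀) (right hB₁)
    (commute_kronecker_one_one_kronecker_s14 _ _) (commute_kronecker_one_one_kronecker_s14 _ _)
    (commute_kronecker_one_one_kronecker_s14 _ _) (commute_kronecker_one_one_kronecker_s14 _ _)
  simpa only [chshOperator, ← mul_kronecker_mul, mul_one, one_mul, ← sub_kronecker_s14,
    ← kronecker_sub_s14] using hcomm

end Kronecker

noncomputable def spinObservable (θ : ℝ) : Matrix (Fin 2) (Fin 2) ℂ :=
  (Real.cos θ : ℂ) • sigmaZ + (Real.sin θ : ℂ) • sigmaX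

theorem spinObservable_eq (θ : ℝ) :
    spinObservable θ = !![(Real.cos θ : ℂ), Real.sin θ; Real.sin θ, -Real.cos θ] := by
  ext i j; fin_cases i <;> fin_cases j <;> simp [spinObservable, sigmaX, sigmaZ]

theorem spinObservable_pi : spinObservable Real.pi = -sigmaZ := by
  simp [spinObservable]

theorem spinObservable_mul_self (θ : ℝ) : spinObservable θ * spinObservable θ = 1 := by
  rw [spinObservable_eq, mul_fin_two, one_fin_two]
  ext i j; fin_cases i <;> fin_cases j <;>
    simp [← sq, Complex.cos_sq_add_sin_sq, Complex.sin_sq_add_cos_sq, mul_comm]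

-- `σ_z σ_x = i σ_y`, so `sigmaZX ⊗ₖ sigmaZX = -σ_y ⊗ σ_y`.
noncomputable def sigmaZX : Matrix (Fin 2) (Fin 2) ℂ := sigmaZ * sigmaX

theorem spinObservable_commutator (θ φ : ℝ) :
    spinObservable θ * spinObservable φ - spinObservable φ * spinObservable θ =
      (2 * Real.sin (φ - θ) : ℂ) • sigmaZX := by
  rw [spinObservable_eq, spinObservable_eq, mul_fin_two, mul_fin_two]
  ext i j; fin_cases i <;> fin_cases j <;> simp [sigmaZX, sigmaZ, sigmaX, Real.sin_sub] <;> ring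

namespace Module.End

variable {K V : Type*} [Field K] [AddCommGroup V] [Module K V]

theorem HasEigenvalue.sq_sub_sq_eq {f g : End K V} {a b μ : K} (hf : f * f = a • 1 + b • g)
    (hg : g * g = 1) (hμ : f.HasEigenvalue μ) : (μ ^ 2 - a) ^ 2 = b ^ 2 := by
  obtain ⟨v, hv⟩ := hμ.exists_hasEigenvector
  have hfv : f (f v) = μ ^ 2 • v := by
    rw [hv.apply_eq_smul, map_smul, hv.apply_eq_smul, smul_smul, sq]
  have hgv : b • g v = (μ ^ 2 - a) • v := by
    have := congrArg (· v) hf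
    simp only [mul_apply, LinearMap.add_apply, LinearMap.smul_apply, one_apply, hfv] at this
    rw [sub_smul, this, add_sub_cancel_left]
  have hggv : g (g v) = v := by rw [← mul_apply, hg, one_apply]
  refine smul_left_injective K hv.2 ?_
  calc (μ ^ 2 - a) ^ 2 • v = (μ ^ 2 - a) • b • g v := by rw [hgv, smul_smul, sq]
    _ = b • g (b • g v) := by rw [smul_comm, ← map_smul, hgv]
    _ = b ^ 2 • v := by rw [map_smul, hggv, smul_smul, sq]

-- `(f - c) (f + c) w = 0`: either `f w + c w` is a `c`-eigenvector or `w` is a `(-c)`-eigenvector.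
theorem hasEigenvalue_or_hasEigenvalue_neg {f : End K V} {c : K} {w : V} (hw : w ≠ 0)
    (hfw : f (f w) = c ^ 2 • w) : f.HasEigenvalue c ∨ f.HasEigenvalue (-c) := by
  by_cases hu : f w + c • w = 0
  · refine Or.inr (hasEigenvalue_of_hasEigenvector ⟨mem_eigenspace_iff.2 ?_, hw⟩)
    rw [neg_smul, ← sub_eq_zero, sub_neg_eq_add, hu]
  · refine Or.inl (hasEigenvalue_of_hasEigenvector ⟨mem_eigenspace_iff.2 ?_, hu⟩)
    rw [map_add, map_smul, hfw, smul_add, smul_smul, ← sq, add_comm]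

end Module.End

theorem sq_two_mul_sqrt_one_add {t : ℝ} (ht : 0 ≤ t) :
    (2 * Real.sqrt (1 + t)) ^ 2 = 4 + 4 * t := by
  rw [mul_pow, Real.sq_sqrt (by linarith)]; ring

theorem two_le_two_mul_sqrt_one_add {t : ℝ} (ht : 0 ≤ t) : 2 ≤ 2 * Real.sqrt (1 + t) := by
  have : 1 ≤ Real.sqrt (1 + t) := Real.one_le_sqrt.2 (by linarith)
  linarith

theorem two_mul_sqrt_one_add_eq_two_iff {t : ℝ} (ht : 0 ≤ t) :
    2 * Real.sqrt (1 + t) = 2 ↔ t = 0 := by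
  rw [mul_eq_left₀ two_ne_zero, Real.sqrt_eq_one]
  constructor <;> intro h <;> linarith

section SquareEquation

open Module.End

variable {V : Type*} [AddCommGroup V] [Module ℂ V] {f g : Module.End ℂ V} {s : ℝ}

theorem norm_le_two_mul_sqrt_of_hasEigenvalue
    (hf : f * f = (4 : ℂ) • 1 + -(4 * (s : ℂ)) • g) (hg : g * g = 1) {μ : ℂ}
    (hμ : f.HasEigenvalue μ) : ‖μ‖ ≤ 2 * Real.sqrt (1 + |s|) := by
  have hμsq : μ ^ 2 = ((4 - 4 * s : ℝ) : ℂ) ∨ μ ^ 2 = ((4 + 4 * s : ℝ) : ℂ) := by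
    rcases sq_eq_sq_iff_eq_or_eq_neg.1 (hμ.sq_sub_sq_eq hf hg) with h | h
    · left; push_cast; linear_combination h
    · right; push_cast; linear_combination h
  have hbound : ‖μ‖ ^ 2 ≤ (2 * Real.sqrt (1 + |s|)) ^ 2 := by
    rw [sq_two_mul_sqrt_one_add (abs_nonneg s), ← norm_pow]
    rcases hμsq with h | h <;> rw [h, Complex.norm_real, Real.norm_eq_abs, abs_le] <;>
      constructor <;> linarith [le_abs_self s, neg_abs_le s]
  exact (pow_le_pow_iff_left₀ (norm_nonneg _) (by positivity) two_ne_zero).1 hbound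

theorem exists_hasEigenvalue_norm_eq_two_mul_sqrt
    (hf : f * f = (4 : ℂ) • 1 + -(4 * (s : ℂ)) • g)
    (hg : ∀ ε : ℂ, ε ^ 2 = 1 → g.HasEigenvalue ε) :
    ∃ μ : ℂ, f.HasEigenvalue μ ∧ ‖μ‖ = 2 * Real.sqrt (1 + |s|) := by
  obtain ⟨ε, hε, hεs⟩ : ∃ ε : ℂ, ε ^ 2 = 1 ∧ -(4 * (s : ℂ)) * ε = 4 * |s| := by
    rcases le_total 0 s with h | h
    · exact ⟨-1, by norm_num, by rw [abs_of_nonneg h]; ring⟩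
    · exact ⟨1, by norm_num, by rw [abs_of_nonpos h]; push_cast; ring⟩
  obtain ⟨w, hw⟩ := (hg ε hε).exists_hasEigenvector
  have hfw : f (f w) = ((2 * Real.sqrt (1 + |s|) : ℝ) : ℂ) ^ 2 • w := by
    rw [← Module.End.mul_apply, hf, LinearMap.add_apply, LinearMap.smul_apply,
      LinearMap.smul_apply, Module.End.one_apply, hw.apply_eq_smul, smul_smul, ← add_smul, hεs,
      ← Complex.ofReal_pow, sq_two_mul_sqrt_one_add (abs_nonneg s)]
    push_cast; rfl
  have hnorm : ‖((2 * Real.sqrt (1 + |s|) : ℝ) : ℂ)‖ = 2 * Real.sqrt (1 + |s|) :=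
    Complex.norm_of_nonneg (by positivity)
  rcases hasEigenvalue_or_hasEigenvalue_neg hw.2 hfw with h | h
  · exact ⟨_, h, hnorm⟩
  · exact ⟨_, h, by rw [norm_neg, hnorm]⟩

end SquareEquation

theorem sigmaZX_mul_self : sigmaZX * sigmaZX = -1 := by
  simp [sigmaZX, sigmaZ, sigmaX, one_fin_two]

theorem sigmaZX_kronecker_sigmaZX_mul_self : sigmaZX ⊗ₖ sigmaZX * sigmaZX ⊗ₖ sigmaZX = 1 := by
  rw [← mul_kronecker_mul, sigmaZX_mul_self, ← neg_one_smul ℂ 1, smul_kronecker, kronecker_smul,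
    smul_smul, one_kronecker_one]
  norm_num

theorem hasEigenvalue_toLin'_sigmaZX_kronecker_sigmaZX {ε : ℂ} (hε : ε ^ 2 = 1) :
    Module.End.HasEigenvalue (toLin' (sigmaZX ⊗ₖ sigmaZX)) ε := by
  refine Module.End.hasEigenvalue_of_hasEigenvector
    (x := Pi.single (0, 0) 1 + ε • Pi.single (1, 1) 1)
    ⟨Module.End.mem_eigenspace_iff.2 ?_, fun h => by simpa using congrFun h (0, 0)⟩
  ext ⟨i, j⟩
  fin_cases i <;> fin_cases j <;> simp [sigmaZX, sigmaZ, sigmaX, mulVec, dotProduct,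
    Fintype.sum_prod_type, Fin.sum_univ_two, Pi.single_apply, ← sq, hε]

theorem toLin'_sigmaZX_kronecker_sigmaZX_mul_self :
    toLin' (sigmaZX ⊗ₖ sigmaZX) * toLin' (sigmaZX ⊗ₖ sigmaZX) = 1 :=
  (map_mul toLinAlgEquiv' _ _).symm.trans (by rw [sigmaZX_kronecker_sigmaZX_mul_self, map_one])

theorem chshOperator_spinObservable_mul_self (αA αB : ℝ) :
    chshOperator (-sigmaZ) (spinObservable αA) (-sigmaZ) (spinObservable αB) *
        chshOperator (-sigmaZ) (spinObservable αA) (-sigmaZ) (spinObservable αB) =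
      (4 : ℂ) • 1 + -(4 * ((Real.sin αA * Real.sin αB : ℝ) : ℂ)) • sigmaZX ⊗ₖ sigmaZX := by
  rw [← spinObservable_pi, chshOperator_mul_self (spinObservable_mul_self _)
    (spinObservable_mul_self _) (spinObservable_mul_self _) (spinObservable_mul_self _),
    spinObservable_commutator, spinObservable_commutator, smul_kronecker, kronecker_smul,
    smul_smul, Real.sin_sub_pi, Real.sin_sub_pi, sub_eq_add_neg, ← neg_smul,
    Algebra.smul_def (4 : ℂ), mul_one, map_ofNat]
  congr 3
  push_cast
  ring

theorem toLin'_chshOperator_spinObservable_mul_self (αA αB : ℝ) :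
    toLin' (chshOperator (-sigmaZ) (spinObservable αA) (-sigmaZ) (spinObservable αB)) *
        toLin' (chshOperator (-sigmaZ) (spinObservable αA) (-sigmaZ) (spinObservable αB)) =
      (4 : ℂ) • 1 + -(4 * ((Real.sin αA * Real.sin αB : ℝ) : ℂ)) •
        toLin' (sigmaZX ⊗ₖ sigmaZX) := by
  have h := congrArg toLinAlgEquiv' (chshOperator_spinObservable_mul_self αA αB)
  simp only [map_mul, map_add, map_smul, map_one] at h
  exact h

/-- The maximal eigenvalue modulus of the CHSH operator with settings determined by
angles `αA`, `αB` equals `2√(1+|sin αA||sin αB|) ≥ 2`, with equality iff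
`sin αA · sin αB = 0`. -/
theorem stmt_14 (αA αB : ℝ)
    (A₀ A₁ B₀ B₁ : Matrix (Fin 2) (Fin 2) ℂ)
    (hA₀ : A₀ = -sigmaZ) (hB₀ : B₀ = -sigmaZ)
    (hA₁ : A₁ = (Real.cos αA : ℂ) • sigmaZ + (Real.sin αA : ℂ) • sigmaX)
    (hB₁ : B₁ = (Real.cos αB : ℂ) • sigmaZ + (Real.sin αB : ℂ) • sigmaX)
    (B : Matrix (Fin 2 × Fin 2) (Fin 2 × Fin 2) ℂ)
    (hB : B = A₀ ⊗ₖ B₀ + A₀ ⊗ₖ B₁ + A₁ ⊗ₖ B₀ - A₁ ⊗ₖ B₁) :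
    (∃ lam : ℂ, Module.End.HasEigenvalue (Matrix.toLin' B) lam ∧
        ‖lam‖ = 2 * Real.sqrt (1 + |Real.sin αA| * |Real.sin αB|)) ∧
    (∀ lam : ℂ, Module.End.HasEigenvalue (Matrix.toLin' B) lam →
        ‖lam‖ ≤ 2 * Real.sqrt (1 + |Real.sin αA| * |Real.sin αB|)) ∧
    2 ≤ 2 * Real.sqrt (1 + |Real.sin αA| * |Real.sin αB|) ∧
    (2 * Real.sqrt (1 + |Real.sin αA| * |Real.sin αB|) = 2 ↔
      Real.sin αA * Real.sin αB = 0) := by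
  obtain rfl : B = chshOperator (-sigmaZ) (spinObservable αA) (-sigmaZ) (spinObservable αB) := by
    rw [hB, hA₀, hB₀, hA₁, hB₁]; rfl
  have hsq := toLin'_chshOperator_spinObservable_mul_self αA αB
  rw [← abs_mul]
  exact ⟨exists_hasEigenvalue_norm_eq_two_mul_sqrt hsq
      fun _ => hasEigenvalue_toLin'_sigmaZX_kronecker_sigmaZX,
    fun _ => norm_le_two_mul_sqrt_of_hasEigenvalue hsq toLin'_sigmaZX_kronecker_sigmaZX_mul_self,
    two_le_two_mul_sqrt_one_add (abs_nonneg _),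
    (two_mul_sqrt_one_add_eq_two_iff (abs_nonneg _)).trans abs_eq_zero⟩
end
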